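/- arXiv:1101.2786 — 4 statements merged into one kernel-verified Lean document; each statement's English description precedes it below -/
import Mathlib

section
/- For the Wei GFU model limit generating matrix H with entries H_{ii}=p^i and H_{ij}=q^j/(d-1) for i≠j (where q^j=1-p^j and 0<p^i<1), the vector v* with components v*^i = (1/q^i)/(∑_{j=1}^d 1/q^j) satisfies Hv*=v* and ∑_i v*^i = 1. -/
/-!
Writing `q = 1 - p`, the vector `v` is chosen so that `q j * v j` is one constant `c`.
Then every off-diagonal entry of row `i` of `H v` contributes `c / (d - 1)`, so the `d - 1` of
them together give `c = q i * v i = v i - p i * v i`.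
-/

open Finset Matrix

section

variable {ι K : Type*} [Fintype ι] [DecidableEq ι] [Field K]

/-- The limit generating matrix of Wei's GFU model. -/
def gfuMatrix (p : ι → K) : Matrix ι ι K :=
  Matrix.of fun i j => if i = j then p i else (1 - p j) / (Fintype.card ι - 1)

theorem gfuMatrix_mulVec_eq_self {p v : ι → K} {c : K} (hcard : (Fintype.card ι : K) - 1 ≠ 0)
    (hv : ∀ j, (1 - p j) * v j = c) : gfuMatrix p *ᵥ v = v := by
  funext i
  set n : K := (Fintype.card ι : K)
  have hentry : ∀ j, gfuMatrix p i j * v j =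
      (if i = j then p i * v i - c / (n - 1) else 0) + c / (n - 1) := by
    intro j
    by_cases hij : i = j
    · subst hij; simp [gfuMatrix]
    · simp only [gfuMatrix, Matrix.of_apply, if_neg hij, zero_add, ← hv j]
      ring
  calc (gfuMatrix p *ᵥ v) i
      = p i * v i - c / (n - 1) + n * (c / (n - 1)) := by
        simp only [Matrix.mulVec, dotProduct, hentry, sum_add_distrib, sum_ite_eq, mem_univ,
          if_true, sum_const, card_univ, nsmul_eq_mul, n]
    _ = p i * v i + c := by field_simp; ring
    _ = v i := by rw [← hv i]; ring

end

section

variable {ι K : Type*} [Fintype ι] [Field K]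

theorem mul_div_sum_inv_eq {q : ι → K} (hq : ∀ i, q i ≠ 0) (i : ι) :
    q i * (1 / q i / ∑ j, 1 / q j) = 1 / ∑ j, 1 / q j := by
  field_simp [hq i]

theorem sum_div_sum_eq_one {f : ι → K} (hf : ∑ j, f j ≠ 0) : ∑ i, f i / ∑ j, f j = 1 := by
  rw [← sum_div, div_self hf]

end

/-- For the Wei GFU model limit generating matrix `H` with `H i i = p i` and
`H i j = (1 - p j)/(d-1)` for `i ≠ j`, the vector `v` with
`v i = (1/(1-p i)) / ∑ j, 1/(1-p j)` satisfies `H v = v` and `∑ i, v i = 1`. -/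
theorem stmt0 (d : ℕ) (hd : 2 ≤ d) (p : Fin d → ℝ) (hp : ∀ i, 0 < p i ∧ p i < 1)
    (H : Matrix (Fin d) (Fin d) ℝ)
    (hH : ∀ i j, H i j = if i = j then p i else (1 - p j) / (d - 1))
    (v : Fin d → ℝ)
    (hv : ∀ i, v i = (1 / (1 - p i)) / ∑ j, 1 / (1 - p j)) :
    H.mulVec v = v ∧ ∑ i, v i = 1 := by
  have hq : ∀ i, 1 - p i ≠ 0 := fun i => (sub_pos.2 (hp i).2).ne'
  have hsum : ∑ j, 1 / (1 - p j) ≠ 0 := by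
    have : Nonempty (Fin d) := ⟨⟨0, by omega⟩⟩
    exact (sum_pos (fun j _ => one_div_pos.2 (sub_pos.2 (hp j).2)) univ_nonempty).ne'
  have hcard : (Fintype.card (Fin d) : ℝ) - 1 ≠ 0 := by
    rw [Fintype.card_fin]
    have : (2 : ℝ) ≤ d := by exact_mod_cast hd
    linarith
  have hH' : H = gfuMatrix p := by
    ext i j
    rw [hH, gfuMatrix, Matrix.of_apply, Fintype.card_fin]
  have hv' : v = fun i => 1 / (1 - p i) / ∑ j, 1 / (1 - p j) := funext hv
  subst hH' hv'
  exact ⟨gfuMatrix_mulVec_eq_self hcard (mul_div_sum_inv_eq hq), sum_div_sum_eq_one hsum⟩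
end

section
/- For the BHS model limit generating matrix H with H_{ii}=p^i and H_{ij}=p^i(1-p^j)/∑_{k≠j}p^k for i≠j, the vector v* with components v*^i = (p^i/(1-p^i))·∑_{k≠i}p^k, suitably normalized to have coordinate sum 1, satisfies Hv* = v*. -/
open Finset

/-- For the BHS model limit generating matrix `H`, the normalized vector `v` with
components proportional to `(p i/(1-p i)) * ∑_{k≠i} p k` satisfies `H v = v` and has
coordinate sum 1. -/
theorem stmt3 (d : ℕ) (hd : 2 ≤ d) (p : Fin d → ℝ) (hp : ∀ i, 0 < p i ∧ p i < 1)
    (H : Matrix (Fin d) (Fin d) ℝ)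
    (hH : ∀ i j, H i j = if i = j then p i
        else p i * (1 - p j) / ∑ k ∈ univ.erase j, p k)
    (u v : Fin d → ℝ)
    (hu : ∀ i, u i = p i / (1 - p i) * ∑ k ∈ univ.erase i, p k)
    (hv : ∀ i, v i = u i / ∑ j, u j) :
    H.mulVec v = v ∧ ∑ i, v i = 1 := by
  have hSpos : ∀ i : Fin d, 0 < ∑ k ∈ univ.erase i, p k := by
    intro i
    apply Finset.sum_pos (fun k _ => (hp k).1)
    rw [← Finset.card_pos, Finset.card_erase_of_mem (mem_univ i), Finset.card_univ,
      Fintype.card_fin]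
    omega
  have h1p : ∀ i, (1 : ℝ) - p i ≠ 0 := fun i => by have := (hp i).2; linarith
  have hupos : ∀ i, 0 < u i := by
    intro i
    rw [hu i]
    exact mul_pos (div_pos (hp i).1 (by have := (hp i).2; linarith)) (hSpos i)
  have hT : (0 : ℝ) < ∑ j, u j := Finset.sum_pos (fun j _ => hupos j) ⟨⟨0, by omega⟩, mem_univ _⟩
  have hTne : (∑ j, u j) ≠ 0 := ne_of_gt hT
  -- key: H.mulVec u = u
  have hkey : ∀ i, ∑ j, H i j * u j = u i := by
    intro i
    rw [← Finset.add_sum_erase _ _ (mem_univ i)]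
    have herase : ∑ j ∈ univ.erase i, H i j * u j = p i * ∑ k ∈ univ.erase i, p k := by
      rw [Finset.mul_sum]
      apply Finset.sum_congr rfl
      intro j hj
      have hji : i ≠ j := (Finset.ne_of_mem_erase hj).symm
      rw [hH i j, if_neg hji, hu j]
      have gen : ∀ a : ℝ, a ≠ 0 →
          p i * (1 - p j) / a * (p j / (1 - p j) * a) = p i * p j := by
        intro a ha
        have h := h1p j
        field_simp
      exact gen _ (ne_of_gt (hSpos j))
    rw [herase, hH i i, if_pos rfl, hu i]
    have gen : ∀ a : ℝ, p i * (p i / (1 - p i) * a) + p i * a = p i / (1 - p i) * a := by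
      intro a
      have h := h1p i
      field_simp
      ring
    exact gen _
  constructor
  · funext i
    simp only [Matrix.mulVec, dotProduct]
    have : ∀ j, H i j * v j = H i j * u j / ∑ k, u k := by
      intro j; rw [hv j]; ring
    rw [Finset.sum_congr rfl fun j _ => this j, ← Finset.sum_div, hkey i, ← hv i]
  · have : ∀ i : Fin d, v i = u i / ∑ j, u j := hv
    rw [Finset.sum_congr rfl fun i _ => this i, ← Finset.sum_div, div_self hTne]
end

section
/- For d > 2 and p^i > p^j, the allocation ratios satisfy v*_{BHS}^i / v*_{BHS}^j > v*_W^i / v*_W^j > 1, where v*_W is the Wei eigenvector (components proportional to 1/(1-p^k)) and v*_{BHS} is the BHS eigenvector (components proportional to (p^k/(1-p^k))·∑_{ℓ≠k}p^ℓ). -/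
open Finset

/-- For `d ≥ 3` and `p i > p j`, the allocation ratios satisfy
`vBHS i / vBHS j > vW i / vW j > 1`. -/
theorem stmt5 (d : ℕ) (hd : 3 ≤ d) (p : Fin d → ℝ) (hp : ∀ k, 0 < p k ∧ p k < 1)
    (i j : Fin d) (hij : i ≠ j) (hpij : p i > p j)
    (vW vB : Fin d → ℝ)
    (hvW : ∀ k, vW k = (1 / (1 - p k)) / ∑ l, 1 / (1 - p l))
    (hvB : ∀ k, vB k = (p k / (1 - p k) * ∑ l ∈ univ.erase k, p l) /
        ∑ m, p m / (1 - p m) * ∑ l ∈ univ.erase m, p l) :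
    vB i / vB j > vW i / vW j ∧ vW i / vW j > 1 := by
  obtain ⟨hpi0, hpi1⟩ := hp i
  obtain ⟨hpj0, hpj1⟩ := hp j
  haveI : Nonempty (Fin d) := ⟨⟨0, by omega⟩⟩
  set S := ∑ l, p l with hSdef
  have hsum : ∀ k : Fin d, ∑ l ∈ univ.erase k, p l = S - p k := fun k =>
    Finset.sum_erase_eq_sub (Finset.mem_univ k)
  have hSk : ∀ k : Fin d, p k < S := by
    intro k
    have hne : (univ.erase k).Nonempty := by
      rw [← Finset.card_pos, Finset.card_erase_of_mem (Finset.mem_univ k),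
        Finset.card_univ, Fintype.card_fin]
      omega
    have hpos : 0 < ∑ l ∈ univ.erase k, p l :=
      Finset.sum_pos (fun l _ => (hp l).1) hne
    rw [hsum k] at hpos; linarith
  have hSij : p i + p j < S := by
    have hjmem : j ∈ univ.erase i := Finset.mem_erase.mpr ⟨Ne.symm hij, Finset.mem_univ j⟩
    have h1 : ∑ l ∈ (univ.erase i).erase j, p l = (S - p i) - p j := by
      rw [Finset.sum_erase_eq_sub hjmem, hsum i]
    have hne : ((univ.erase i).erase j).Nonempty := by
      rw [← Finset.card_pos, Finset.card_erase_of_mem hjmem,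
        Finset.card_erase_of_mem (Finset.mem_univ i), Finset.card_univ, Fintype.card_fin]
      omega
    have hpos : 0 < ∑ l ∈ (univ.erase i).erase j, p l :=
      Finset.sum_pos (fun l _ => (hp l).1) hne
    rw [h1] at hpos; linarith
  have hDW : 0 < ∑ l, 1 / (1 - p l) :=
    Finset.sum_pos (fun l _ => div_pos one_pos (by linarith [(hp l).2])) Finset.univ_nonempty
  have hDB : 0 < ∑ m, p m / (1 - p m) * ∑ l ∈ univ.erase m, p l := by
    refine Finset.sum_pos (fun m _ => ?_) Finset.univ_nonempty
    rw [hsum m]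
    have h1 := (hp m).1
    have h2 := (hp m).2
    have h3 := hSk m
    have h4 : 0 < p m / (1 - p m) := div_pos h1 (by linarith)
    nlinarith
  have hai : (0:ℝ) < 1 - p i := by linarith
  have haj : (0:ℝ) < 1 - p j := by linarith
  have hW : vW i / vW j = (1 - p j) / (1 - p i) := by
    rw [hvW i, hvW j]
    field_simp
  have hWgt : vW i / vW j > 1 := by
    rw [hW]
    rw [gt_iff_lt, lt_div_iff₀ hai]
    linarith
  refine ⟨?_, hWgt⟩
  have hB : vB i / vB j =
      ((1 - p j) * (p i * (S - p i))) / ((1 - p i) * (p j * (S - p j))) := by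
    rw [hvB i, hvB j, hsum i, hsum j]
    have h1 : p j / (1 - p j) * (S - p j) ≠ 0 := by
      have := hSk j
      have h2 : 0 < p j / (1 - p j) * (S - p j) :=
        mul_pos (div_pos hpj0 haj) (by linarith)
      exact h2.ne'
    rw [div_div_div_comm, div_self hDB.ne', div_one]
    field_simp
  have hposj : 0 < (1 - p i) * (p j * (S - p j)) :=
    mul_pos hai (mul_pos hpj0 (by linarith [hSk j]))
  rw [hB, hW, gt_iff_lt, div_lt_div_iff₀ hai hposj]
  have key : 0 < (1 - p j) * (1 - p i) * ((p i - p j) * (S - p i - p j)) :=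
    mul_pos (mul_pos haj hai) (mul_pos (by linarith) (by linarith))
  nlinarith [key]
end

section
/- Let (N_n) be an increasing ℕ-valued process with N_0 = 1, ΔN_k ∈ {0,1}, N_n → ∞ a.s., and let (T_k) be [0,1]-valued with E[(T_k − p)ΔN_k | F_{k-1}] = 0. If the martingale ∑_{k=1}^n (T_k − p)ΔN_k/(N_{k-1}+1) converges a.s., then (∑_{k=1}^n T_k ΔN_k)/N_n → p a.s. (Kronecker-type lemma along a random subsequence). -/
open MeasureTheory Finset Filter Topology

/-- Abel summation identity. -/
lemma abel_aux (a b : ℕ → ℝ) (hb : ∀ k, b k ≠ 0) (n : ℕ) :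
    ∑ k ∈ range (n + 1), a k
      = b n * (∑ k ∈ range (n + 1), a k / b k)
        - ∑ k ∈ range n, (b (k + 1) - b k) * (∑ j ∈ range (k + 1), a j / b j) := by
  induction n with
  | zero => simp [mul_div_cancel₀ _ (hb 0)]
  | succ n ih =>
      have ha : a (n + 1) = b (n + 1) *
          ((∑ j ∈ range (n + 2), a j / b j) - ∑ j ∈ range (n + 1), a j / b j) := by
        rw [sum_range_succ (fun j => a j / b j) (n + 1)]
        rw [add_sub_cancel_left, mul_div_cancel₀ _ (hb (n + 1))]
      rw [sum_range_succ a (n + 1), ih,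
        sum_range_succ (fun k => (b (k + 1) - b k) * (∑ j ∈ range (k + 1), a j / b j)) n,
        ha]
      ring

/-- Kronecker's lemma. -/
lemma kronecker_aux {a b : ℕ → ℝ} (hb1 : ∀ k, 1 ≤ b k) (hmono : Monotone b)
    (hbtop : Tendsto b atTop atTop) {L : ℝ}
    (hS : Tendsto (fun n => ∑ k ∈ range n, a k / b k) atTop (𝓝 L)) :
    Tendsto (fun n => (∑ k ∈ range (n + 1), a k) / b n) atTop (𝓝 0) := by
  have hb0 : ∀ k, b k ≠ 0 := fun k => by linarith [hb1 k]
  set S : ℕ → ℝ := fun n => ∑ k ∈ range n, a k / b k with hSdef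
  set e : ℕ → ℝ := fun n => S n - L with hedef
  have he : Tendsto e atTop (𝓝 0) := by
    simpa [hedef] using hS.sub_const L
  -- R n := ∑_{k<n} (b(k+1)-b k) e(k+1) is o(b n)
  have hRo : (fun n => ∑ k ∈ range n, (b (k + 1) - b k) * e (k + 1)) =o[atTop] b := by
    have hfg : (fun k => (b (k + 1) - b k) * e (k + 1)) =o[atTop]
        (fun k => b (k + 1) - b k) := by
      rw [Asymptotics.isLittleO_iff]
      intro ε hε
      filter_upwards [(he.comp (tendsto_add_atTop_nat 1)).eventually
        (Metric.ball_mem_nhds 0 hε)] with k hk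
      have h1 : |e (k + 1)| ≤ ε := by
        have := le_of_lt (Metric.mem_ball.1 hk)
        simpa [Real.dist_eq, Function.comp] using this
      have h2 : 0 ≤ b (k + 1) - b k := sub_nonneg.2 (hmono (Nat.le_succ k))
      rw [Real.norm_eq_abs, Real.norm_eq_abs, abs_mul, abs_of_nonneg h2]
      calc (b (k + 1) - b k) * |e (k + 1)| ≤ (b (k + 1) - b k) * ε := by
            exact mul_le_mul_of_nonneg_left h1 h2
        _ = ε * (b (k + 1) - b k) := mul_comm _ _
    have hgsum : Tendsto (fun n => ∑ k ∈ range n, (b (k + 1) - b k)) atTop atTop := by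
      have : ∀ n, ∑ k ∈ range n, (b (k + 1) - b k) = b n - b 0 := fun n =>
        Finset.sum_range_sub b n
      simp only [this]
      exact hbtop.atTop_add tendsto_const_nhds
    have := hfg.sum_range (fun k => sub_nonneg.2 (hmono (Nat.le_succ k))) hgsum
    simp only [Finset.sum_range_sub b] at this
    refine this.trans_isBigO ?_
    rw [Asymptotics.isBigO_iff]
    refine ⟨1, Filter.Eventually.of_forall fun n => ?_⟩
    have h1 : (0:ℝ) ≤ b n - b 0 := sub_nonneg.2 (hmono (Nat.zero_le n))
    have h2 : (0:ℝ) < b n := lt_of_lt_of_le one_pos (hb1 n)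
    rw [Real.norm_eq_abs, Real.norm_eq_abs, abs_of_nonneg h1, abs_of_pos h2, one_mul]
    linarith [hb1 0]
  have hRdiv : Tendsto (fun n => (∑ k ∈ range n, (b (k + 1) - b k) * e (k + 1)) / b n)
      atTop (𝓝 0) := hRo.tendsto_div_nhds_zero
  have hb0div : Tendsto (fun n => L * b 0 / b n) atTop (𝓝 0) :=
    Tendsto.div_atTop tendsto_const_nhds hbtop
  have hS1 : Tendsto (fun n => S (n + 1)) atTop (𝓝 L) :=
    hS.comp (tendsto_add_atTop_nat 1)
  have key : Tendsto (fun n => S (n + 1)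
      - (∑ k ∈ range n, (b (k + 1) - b k) * e (k + 1)) / b n
      - (L - L * b 0 / b n)) atTop (𝓝 (L - 0 - (L - 0))) :=
    (hS1.sub hRdiv).sub (tendsto_const_nhds.sub hb0div)
  simp only [sub_zero, sub_self] at key
  refine key.congr fun n => ?_
  -- pointwise identity
  have habel := abel_aux a b hb0 n
  have hsplit : ∑ k ∈ range n, (b (k + 1) - b k) * S (k + 1)
      = (∑ k ∈ range n, (b (k + 1) - b k) * e (k + 1)) + L * (b n - b 0) := by
    rw [← Finset.sum_range_sub b n, Finset.mul_sum, ← Finset.sum_add_distrib]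
    refine Finset.sum_congr rfl fun k _ => ?_
    simp only [hedef]
    ring
  have hb0n := hb0 n
  rw [hsplit] at habel
  have : (∑ k ∈ range (n + 1), a k) / b n
      = (b n * S (n + 1) - ((∑ k ∈ range n, (b (k + 1) - b k) * e (k + 1))
          + L * (b n - b 0))) / b n := by rw [← habel]
  rw [this]
  field_simp
  ring
/-- Kronecker-type lemma along a random subsequence: if `N n → ∞` a.s. and the
martingale `∑_{k≤n} (T k − p) ΔN k / (N (k-1) + 1)` converges a.s., then
`(∑_{k≤n} T k ΔN k) / N n → p` a.s. -/
theorem stmt16 {Ω : Type*} {mΩ : MeasurableSpace Ω} {μ : Measure Ω}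
    [IsProbabilityMeasure μ]
    (ℱ : Filtration ℕ mΩ) (p : ℝ) (hp : 0 < p ∧ p < 1)
    (ΔN : ℕ → Ω → ℝ) (hΔN01 : ∀ k ω, ΔN k ω = 0 ∨ ΔN k ω = 1)
    (hΔNmeas : ∀ k, Measurable[ℱ k] (ΔN k))
    (N : ℕ → Ω → ℝ) (hN : ∀ n ω, N n ω = 1 + ∑ k ∈ Finset.Icc 1 n, ΔN k ω)
    (hNinf : ∀ᵐ ω ∂μ, Tendsto (fun n => N n ω) atTop atTop)
    (T : ℕ → Ω → ℝ) (hT01 : ∀ k ω, T k ω ∈ Set.Icc (0 : ℝ) 1)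
    (horth : ∀ k, μ[(fun ω => (T (k + 1) ω - p) * ΔN (k + 1) ω) | ℱ k] =ᵐ[μ] 0)
    (hconv : ∀ᵐ ω ∂μ, ∃ L : ℝ, Tendsto
        (fun n => ∑ k ∈ Finset.Icc 1 n, (T k ω - p) * ΔN k ω / (N (k - 1) ω + 1))
        atTop (nhds L)) :
    ∀ᵐ ω ∂μ, Tendsto
      (fun n => (∑ k ∈ Finset.Icc 1 n, T k ω * ΔN k ω) / N n ω)
      atTop (nhds p) := by
  filter_upwards [hNinf, hconv] with ω hNt hL
  obtain ⟨L, hL⟩ := hL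
  -- basic facts about N · ω
  have hΔnn : ∀ k, 0 ≤ ΔN k ω := fun k => by
    rcases hΔN01 k ω with h | h <;> rw [h] <;> norm_num
  have hN1 : ∀ n, 1 ≤ N n ω := fun n => by
    rw [hN]
    have : 0 ≤ ∑ k ∈ Finset.Icc 1 n, ΔN k ω :=
      Finset.sum_nonneg fun k _ => hΔnn k
    linarith
  have hN0 : ∀ n, N n ω ≠ 0 := fun n => by linarith [hN1 n]
  have hstep : ∀ k, N (k + 1) ω = N k ω + ΔN (k + 1) ω := fun k => by
    rw [hN, hN, Finset.sum_Icc_succ_top (Nat.le_add_left 1 k)]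
    ring
  have hmono : Monotone fun n => N n ω := by
    apply monotone_nat_of_le_succ
    intro n
    rw [hstep n]
    linarith [hΔnn (n + 1)]
  -- key identity: for k ≥ 1 the martingale increments have denominator N k
  have key : ∀ k, (T (k + 1) ω - p) * ΔN (k + 1) ω / (N (k + 1 - 1) ω + 1)
      = (T (k + 1) ω - p) * ΔN (k + 1) ω / N (k + 1) ω := fun k => by
    simp only [Nat.add_sub_cancel]
    rcases hΔN01 (k + 1) ω with h | h
    · rw [h]; simp
    · rw [hstep k, h]
  -- reindex the convergent series to `range`
  set a : ℕ → ℝ := fun k => (T (k + 1) ω - p) * ΔN (k + 1) ω with hadef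
  set b : ℕ → ℝ := fun k => N (k + 1) ω with hbdef
  have hreindex : ∀ (f : ℕ → ℝ) (n : ℕ),
      ∑ k ∈ Finset.Icc 1 n, f k = ∑ k ∈ range n, f (k + 1) := fun f n => by
    rw [← Finset.Ico_add_one_right_eq_Icc, Finset.sum_Ico_eq_sum_range]
    simp [add_comm]
  have hS : Tendsto (fun n => ∑ k ∈ range n, a k / b k) atTop (𝓝 L) := by
    refine hL.congr fun n => ?_
    rw [hreindex (fun k => (T k ω - p) * ΔN k ω / (N (k - 1) ω + 1)) n]
    exact Finset.sum_congr rfl fun k _ => key k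
  have hbtop : Tendsto b atTop atTop := hNt.comp (tendsto_add_atTop_nat 1)
  have hK := kronecker_aux (fun k => hN1 (k + 1))
    (fun i j hij => hmono (Nat.add_le_add_right hij 1)) hbtop hS
  -- back to Icc sums
  have hK' : Tendsto (fun n => (∑ k ∈ Finset.Icc 1 n, (T k ω - p) * ΔN k ω) / N n ω)
      atTop (𝓝 0) := by
    rw [← tendsto_add_atTop_iff_nat 1]
    refine hK.congr fun n => ?_
    rw [hreindex (fun k => (T k ω - p) * ΔN k ω) (n + 1)]
  -- ∑ ΔN = N n - 1
  have hsumΔ : ∀ n, ∑ k ∈ Finset.Icc 1 n, ΔN k ω = N n ω - 1 := fun n => by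
    rw [hN]; ring
  have hdiv : Tendsto (fun n => p / N n ω) atTop (𝓝 0) :=
    Tendsto.div_atTop tendsto_const_nhds hNt
  have hfinal : Tendsto (fun n =>
      (∑ k ∈ Finset.Icc 1 n, (T k ω - p) * ΔN k ω) / N n ω + (p - p / N n ω))
      atTop (𝓝 (0 + (p - 0))) := hK'.add (tendsto_const_nhds.sub hdiv)
  rw [zero_add, sub_zero] at hfinal
  refine hfinal.congr fun n => ?_
  have hsum : ∑ k ∈ Finset.Icc 1 n, T k ω * ΔN k ω
      = (∑ k ∈ Finset.Icc 1 n, (T k ω - p) * ΔN k ω) + p * (N n ω - 1) := by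
    rw [← hsumΔ n, Finset.mul_sum, ← Finset.sum_add_distrib]
    exact Finset.sum_congr rfl fun k _ => by ring
  rw [hsum, add_div]
  congr 1
  rw [mul_sub, mul_one, sub_div, mul_div_assoc, div_self (hN0 n), mul_one]
end
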